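/- For fixed c² ≥ 0, the function α ↦ α^{-2}(e^α - 1 - α) + α^{-1}c² is convex on (0, ∞). -/

import Mathlib

open Real Set Filter Topology

private lemma key_ineq {x : ℝ} (hx : 0 < x) :
    6 + 2 * x ≤ (x ^ 2 - 4 * x + 6) * Real.exp x := by
  have hs : 1 + x + x ^ 2 / 2 + x ^ 3 / 6 + x ^ 4 / 24 ≤ Real.exp x := by
    have := Real.sum_le_exp_of_nonneg hx.le 5
    simp only [Finset.sum_range_succ, Finset.sum_range_zero, Nat.factorial] at this
    norm_num at this
    linarith
  have hQ : (0:ℝ) < x ^ 2 - 4 * x + 6 := by nlinarith [sq_nonneg (x - 2)]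
  nlinarith [mul_le_mul_of_nonneg_left hs hQ.le, pow_nonneg hx.le 4, pow_nonneg hx.le 6]

private lemma hasDerivAt_f (c2 : ℝ) {x : ℝ} (hx0 : x ≠ 0) :
    HasDerivAt (fun α => (Real.exp α - 1 - α) / α ^ 2 + c2 / α)
      ((Real.exp x - 1) / x ^ 2 - 2 * (Real.exp x - 1 - x) / x ^ 3 - c2 / x ^ 2) x := by
  have hu : HasDerivAt (fun x : ℝ => Real.exp x - 1 - x) (Real.exp x - 1) x := by
    exact ((Real.hasDerivAt_exp x).sub_const 1).sub (hasDerivAt_id' x)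
  have hv : HasDerivAt (fun x : ℝ => x ^ 2) (2 * x) x := by
    simpa using hasDerivAt_pow 2 x
  have h1 := hu.div hv (pow_ne_zero 2 hx0)
  have h2 := (hasDerivAt_const x c2).div (hasDerivAt_id x) hx0
  refine (h1.add h2).congr_deriv ?_
  simp only [id_eq]
  field_simp
  ring

private lemma hasDerivAt_g1 (c2 : ℝ) {x : ℝ} (hx0 : x ≠ 0) :
    HasDerivAt (fun x => (Real.exp x - 1) / x ^ 2 - 2 * (Real.exp x - 1 - x) / x ^ 3
        - c2 / x ^ 2)
      (Real.exp x / x ^ 2 - 4 * (Real.exp x - 1) / x ^ 3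
        + 6 * (Real.exp x - 1 - x) / x ^ 4 + 2 * c2 / x ^ 3) x := by
  have hu : HasDerivAt (fun x : ℝ => Real.exp x - 1) (Real.exp x) x := by
    simpa using (Real.hasDerivAt_exp x).sub_const 1
  have hw : HasDerivAt (fun x : ℝ => Real.exp x - 1 - x) (Real.exp x - 1) x := by
    exact ((Real.hasDerivAt_exp x).sub_const 1).sub (hasDerivAt_id' x)
  have hv2 : HasDerivAt (fun x : ℝ => x ^ 2) (2 * x) x := by
    simpa using hasDerivAt_pow 2 x
  have hv3 : HasDerivAt (fun x : ℝ => x ^ 3) (3 * x ^ 2) x := by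
    simpa using hasDerivAt_pow 3 x
  have h1 := hu.div hv2 (pow_ne_zero 2 hx0)
  have h2 := (hw.const_mul (2:ℝ)).div hv3 (pow_ne_zero 3 hx0)
  have h3 := (hasDerivAt_const x c2).div hv2 (pow_ne_zero 2 hx0)
  refine ((h1.sub h2).sub h3).congr_deriv ?_
  field_simp
  ring

theorem disjoint_variance_function_convex (c2 : ℝ) (hc2 : 0 ≤ c2) :
    ConvexOn ℝ (Set.Ioi (0:ℝ))
      (fun α => (Real.exp α - 1 - α) / α ^ 2 + c2 / α) := by
  have hderiv_eq : ∀ x ∈ Ioi (0:ℝ),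
      deriv (fun α => (Real.exp α - 1 - α) / α ^ 2 + c2 / α) x =
        (Real.exp x - 1) / x ^ 2 - 2 * (Real.exp x - 1 - x) / x ^ 3 - c2 / x ^ 2 :=
    fun x hx => (hasDerivAt_f c2 (ne_of_gt hx)).deriv
  have hdd : ∀ x ∈ Ioi (0:ℝ),
      HasDerivAt (deriv (fun α => (Real.exp α - 1 - α) / α ^ 2 + c2 / α))
        (Real.exp x / x ^ 2 - 4 * (Real.exp x - 1) / x ^ 3
          + 6 * (Real.exp x - 1 - x) / x ^ 4 + 2 * c2 / x ^ 3) x := by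
    intro x hx
    apply (hasDerivAt_g1 c2 (ne_of_gt hx)).congr_of_eventuallyEq
    filter_upwards [isOpen_Ioi.mem_nhds hx] with y hy using hderiv_eq y hy
  refine convexOn_of_deriv2_nonneg (convex_Ioi 0) ?_ ?_ ?_ ?_
  · intro x hx
    exact ((hasDerivAt_f c2 (ne_of_gt hx)).differentiableAt.continuousAt).continuousWithinAt
  · rw [interior_Ioi]
    intro x hx
    exact (hasDerivAt_f c2 (ne_of_gt hx)).differentiableAt.differentiableWithinAt
  · rw [interior_Ioi]
    intro x hx
    exact (hdd x hx).differentiableAt.differentiableWithinAt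
  · rw [interior_Ioi]
    intro x hx
    have hx0 : (0:ℝ) < x := hx
    have h2 : deriv^[2] (fun α => (Real.exp α - 1 - α) / α ^ 2 + c2 / α) x =
        Real.exp x / x ^ 2 - 4 * (Real.exp x - 1) / x ^ 3
          + 6 * (Real.exp x - 1 - x) / x ^ 4 + 2 * c2 / x ^ 3 := by
      simp only [Function.iterate_succ, Function.iterate_zero, Function.comp_apply, id_eq]
      exact (hdd x hx).deriv
    rw [h2]
    have hkey := key_ineq hx0
    have hx4 : (0:ℝ) < x ^ 4 := by positivity
    have hrw : Real.exp x / x ^ 2 - 4 * (Real.exp x - 1) / x ^ 3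
          + 6 * (Real.exp x - 1 - x) / x ^ 4 + 2 * c2 / x ^ 3 =
        ((x ^ 2 - 4 * x + 6) * Real.exp x - 6 - 2 * x + 2 * c2 * x) / x ^ 4 := by
      field_simp
      ring
    rw [hrw]
    apply div_nonneg _ hx4.le
    nlinarith
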